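/- Let d ≥ 1 and let Y, Z : ℝ² → ℝ^d be C¹ functions of (t,s). Define q = Y·Z and h = √(1 + |Y|² + |Z|² + q²). If Y and Z satisfy ∂ₜY + ∂ₛ((Z + qY)/h) = 0 and ∂ₜZ + ∂ₛ((Y + qZ)/h) = 0 on ℝ², then ∂ₜh + ∂ₛq = 0 on ℝ². -/

import Mathlib

/-!
With `A = (Z + qY)/h` and `B = (Y + qZ)/h` the two fluxes of the system, one has the pointwise
identities `q = A·B` and `dh = B·dY + A·dZ`. Hence
`∂ₜh + ∂ₛq = B·∂ₜY + A·∂ₜZ + A·∂ₛB + ∂ₛA·B = B·(∂ₜY + ∂ₛA) + A·(∂ₜZ + ∂ₛB) = 0`.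
-/

open scoped RealInnerProductSpace

/-- Partial derivative in the first variable `t` of a map on `ℝ × ℝ`. -/
noncomputable def pt {F : Type*} [NormedAddCommGroup F] [NormedSpace ℝ F]
    (X : ℝ × ℝ → F) (p : ℝ × ℝ) : F := deriv (fun t => X (t, p.2)) p.1

/-- Partial derivative in the second variable `s` of a map on `ℝ × ℝ`. -/
noncomputable def ps {F : Type*} [NormedAddCommGroup F] [NormedSpace ℝ F]
    (X : ℝ × ℝ → F) (p : ℝ × ℝ) : F := deriv (fun s => X (p.1, s)) p.2

/-- `q = Y·Z`. -/
noncomputable def qf {d : ℕ} (Y Z : ℝ × ℝ → EuclideanSpace ℝ (Fin d)) (p : ℝ × ℝ) : ℝ :=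
  ⟪Y p, Z p⟫

/-- `h = √(1 + |Y|² + |Z|² + q²)`. -/
noncomputable def hf {d : ℕ} (Y Z : ℝ × ℝ → EuclideanSpace ℝ (Fin d)) (p : ℝ × ℝ) : ℝ :=
  Real.sqrt (1 + ‖Y p‖ ^ 2 + ‖Z p‖ ^ 2 + qf Y Z p ^ 2)

section PartialDerivatives

variable {F : Type*} [NormedAddCommGroup F] [NormedSpace ℝ F] {X : ℝ × ℝ → F} {p : ℝ × ℝ}

theorem hasDerivAt_pt (hX : DifferentiableAt ℝ X p) :
    HasDerivAt (fun t => X (t, p.2)) (pt X p) p.1 :=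
  (hX.comp p.1 ((hasDerivAt_id _).prodMk (hasDerivAt_const _ _)).differentiableAt).hasDerivAt

theorem hasDerivAt_ps (hX : DifferentiableAt ℝ X p) :
    HasDerivAt (fun s => X (p.1, s)) (ps X p) p.2 :=
  (hX.comp p.2 ((hasDerivAt_const _ _).prodMk (hasDerivAt_id _)).differentiableAt).hasDerivAt

end PartialDerivatives

namespace RelativisticString

variable {E : Type*} [NormedAddCommGroup E] [InnerProductSpace ℝ E]

/-- The quantity `h` of the string equation, as a function of `(Y, Z)`. -/
noncomputable def energy (y z : E) : ℝ :=
  √(1 + ‖y‖ ^ 2 + ‖z‖ ^ 2 + ⟪y, z⟫ ^ 2)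

/-- `flux Y Z = (Z + qY)/h` is the flux in the equation for `Y`; that for `Z` is `flux Z Y`. -/
noncomputable def flux (y z : E) : E :=
  (energy y z)⁻¹ • (z + ⟪y, z⟫ • y)

theorem radicand_pos (y z : E) : 0 < 1 + ‖y‖ ^ 2 + ‖z‖ ^ 2 + ⟪y, z⟫ ^ 2 := by
  positivity

theorem energy_pos (y z : E) : 0 < energy y z :=
  Real.sqrt_pos.2 (radicand_pos y z)

theorem sq_energy (y z : E) : energy y z ^ 2 = 1 + ‖y‖ ^ 2 + ‖z‖ ^ 2 + ⟪y, z⟫ ^ 2 :=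
  Real.sq_sqrt (radicand_pos y z).le

theorem energy_comm (y z : E) : energy y z = energy z y := by
  rw [energy, energy, real_inner_comm, add_right_comm _ (‖y‖ ^ 2)]

theorem inner_flux_flux_swap (y z : E) : ⟪flux y z, flux z y⟫ = ⟪y, z⟫ := by
  have hne := (energy_pos y z).ne'
  have key : ⟪z + ⟪y, z⟫ • y, y + ⟪y, z⟫ • z⟫ = ⟪y, z⟫ * energy y z ^ 2 := by
    simp only [inner_add_left, inner_add_right, real_inner_smul_left, real_inner_smul_right,
      real_inner_self_eq_norm_sq, real_inner_comm y z, sq_energy]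
    ring
  rw [flux, flux, energy_comm z y, real_inner_comm y z, real_inner_smul_left,
    real_inner_smul_right, key]
  field_simp

theorem _root_.HasDerivAt.energy {y z : ℝ → E} {y' z' : E} {t : ℝ}
    (hy : HasDerivAt y y' t) (hz : HasDerivAt z z' t) :
    HasDerivAt (fun t => energy (y t) (z t))
      (⟪flux (z t) (y t), y'⟫ + ⟪flux (y t) (z t), z'⟫) t := by
  have hrad : HasDerivAt (fun t => 1 + ‖y t‖ ^ 2 + ‖z t‖ ^ 2 + ⟪y t, z t⟫ ^ 2)
      (2 * ⟪y t, y'⟫ + 2 * ⟪z t, z'⟫ + 2 * ⟪y t, z t⟫ * (⟪y t, z'⟫ + ⟪y', z t⟫)) t := by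
    refine (((hy.norm_sq.const_add 1).add hz.norm_sq).add ((hy.inner ℝ hz).pow 2)).congr_deriv ?_
    ring
  refine (hrad.sqrt (radicand_pos (y t) (z t)).ne').congr_deriv ?_
  change _ / (2 * RelativisticString.energy (y t) (z t)) = _
  have hne := (energy_pos (y t) (z t)).ne'
  simp only [flux, ← energy_comm (y t), real_inner_smul_left, inner_add_left,
    real_inner_comm (y t) (z t), real_inner_comm y' (z t), real_inner_comm z' (y t)]
  field_simp
  ring

theorem _root_.Differentiable.energy {G : Type*} [NormedAddCommGroup G] [NormedSpace ℝ G]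
    {y z : G → E} (hy : Differentiable ℝ y) (hz : Differentiable ℝ z) :
    Differentiable ℝ (fun p => energy (y p) (z p)) :=
  ((((hy.norm_sq ℝ).const_add 1).add (hz.norm_sq ℝ)).add ((hy.inner ℝ hz).pow 2)).sqrt
    fun p => (radicand_pos (y p) (z p)).ne'

theorem _root_.Differentiable.flux {G : Type*} [NormedAddCommGroup G] [NormedSpace ℝ G]
    {y z : G → E} (hy : Differentiable ℝ y) (hz : Differentiable ℝ z) :
    Differentiable ℝ (fun p => flux (y p) (z p)) :=
  ((hy.energy hz).inv fun _ => (energy_pos _ _).ne').smul (hz.add ((hy.inner ℝ hz).smul hy))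

end RelativisticString

open RelativisticString in
theorem statement8_general (d : ℕ)
    (Y Z : ℝ × ℝ → EuclideanSpace ℝ (Fin d))
    (hY : ContDiff ℝ 1 Y) (hZ : ContDiff ℝ 1 Z)
    (heq1 : ∀ p : ℝ × ℝ,
      pt Y p + ps (fun q => (hf Y Z q)⁻¹ • (Z q + qf Y Z q • Y q)) p = 0)
    (heq2 : ∀ p : ℝ × ℝ,
      pt Z p + ps (fun q => (hf Y Z q)⁻¹ • (Y q + qf Y Z q • Z q)) p = 0) :
    ∀ p : ℝ × ℝ, pt (hf Y Z) p + ps (qf Y Z) p = 0 := by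
  intro p
  have hYd := hY.differentiable one_ne_zero
  have hZd := hZ.differentiable one_ne_zero
  set A := fun p => flux (Y p) (Z p)
  set B := fun p => flux (Z p) (Y p)
  have hA : ps A p = -pt Y p := eq_neg_of_add_eq_zero_right (heq1 p)
  have hB : ps B p = -pt Z p := by
    refine eq_neg_of_add_eq_zero_right (Eq.trans ?_ (heq2 p))
    simp only [B, flux, energy_comm (Z _), real_inner_comm (Y _)]
    rfl
  have hh : pt (hf Y Z) p = ⟪B p, pt Y p⟫ + ⟪A p, pt Z p⟫ :=
    ((hasDerivAt_pt (hYd p)).energy (hasDerivAt_pt (hZd p))).deriv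
  have hq : ps (qf Y Z) p = ⟪A p, ps B p⟫ + ⟪ps A p, B p⟫ := by
    have hqAB : qf Y Z = fun p => ⟪A p, B p⟫ := funext fun p => (inner_flux_flux_swap _ _).symm
    rw [hqAB]
    exact ((hasDerivAt_ps (hYd.flux hZd p)).inner ℝ (hasDerivAt_ps (hZd.flux hYd p))).deriv
  rw [hh, hq, hA, hB, inner_neg_right, inner_neg_left, real_inner_comm (pt Y p)]
  ring

/-- The additional conservation law `∂ₜh + ∂ₛq = 0` holds for every `C¹` solution
of the relativistic string equation in conservative form. -/
theorem statement8 (d : ℕ) (hd : 1 ≤ d)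
    (Y Z : ℝ × ℝ → EuclideanSpace ℝ (Fin d))
    (hY : ContDiff ℝ 1 Y) (hZ : ContDiff ℝ 1 Z)
    (heq1 : ∀ p : ℝ × ℝ,
      pt Y p + ps (fun q => (hf Y Z q)⁻¹ • (Z q + qf Y Z q • Y q)) p = 0)
    (heq2 : ∀ p : ℝ × ℝ,
      pt Z p + ps (fun q => (hf Y Z q)⁻¹ • (Y q + qf Y Z q • Z q)) p = 0) :
    ∀ p : ℝ × ℝ, pt (hf Y Z) p + ps (qf Y Z) p = 0 :=
  statement8_general d Y Z hY hZ heq1 heq2
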